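/- Assume Condition 1 holds together with an explicit gap: λ_{k+1} = λ_{k+2} = ... = λ_p and λ_k ≥ λ_{k+1} + d for some d > 0, and assume k + 2 ≤ p. Decompose δ = δ_1 + δ_2 with δ_1 ∈ W_1 = span{ξ_1, ..., ξ_k} and δ_2 ∈ W_2 = span{ξ_{k+1}, ..., ξ_p}, and assume δ_2 ≠ 0 (i.e., δ ∉ W_1). Then the eigenvalues η_1 ≥ ... ≥ η_p of Σ^tot satisfy η_{k+1} ≥ η_{k+2} + d̃ and η_{k+2} = η_{k+3} = ... = η_p, where d̃ = d·ρ||δ_2||_2^2/(d + ρ||δ||_2^2). (Lemma 5, second case) -/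

import Mathlib

open Matrix
open Matrix

namespace TotalCovAux

/-- dot-with-`v` as a linear map. -/
def dotr {m : ℕ} (v : Fin m → ℝ) : (Fin m → ℝ) →ₗ[ℝ] ℝ where
  toFun x := x ⬝ᵥ v
  map_add' x y := add_dotProduct x y v
  map_smul' c x := smul_dotProduct c x v

@[simp] lemma dotr_apply {m : ℕ} (v x : Fin m → ℝ) : dotr v x = x ⬝ᵥ v := rfl

lemma dot_sum_smul {n m : ℕ} (c : Fin n → ℝ) (f : Fin n → Fin m → ℝ) (v : Fin m → ℝ) :
    (∑ i, c i • f i) ⬝ᵥ v = ∑ i, c i * (f i ⬝ᵥ v) := by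
  rw [show (∑ i, c i • f i) ⬝ᵥ v = dotr v (∑ i, c i • f i) from rfl, map_sum]
  simp [dotr, smul_dotProduct]

lemma dot_smul_sum {n m : ℕ} (c : Fin n → ℝ) (f : Fin n → Fin m → ℝ) (v : Fin m → ℝ) :
    v ⬝ᵥ (∑ i, c i • f i) = ∑ i, c i * (v ⬝ᵥ f i) := by
  rw [dotProduct_comm, dot_sum_smul]
  simp [dotProduct_comm]

lemma span_dot {n m : ℕ} {f : Fin n → Fin m → ℝ} {x v : Fin m → ℝ}
    (hx : x ∈ Submodule.span ℝ (Set.range f)) (h : ∀ i, f i ⬝ᵥ v = 0) : x ⬝ᵥ v = 0 := by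
  obtain ⟨c, hc⟩ := (Submodule.mem_span_range_iff_exists_fun ℝ).mp hx
  rw [← hc, dot_sum_smul]
  simp [h]

lemma dot_self_pos {m : ℕ} {v : Fin m → ℝ} (h : v ≠ 0) : 0 < v ⬝ᵥ v := by
  rcases (Finset.sum_nonneg fun i _ => mul_self_nonneg (v i)).lt_or_eq with h' | h'
  · exact h'
  · exact absurd (dotProduct_self_eq_zero.mp h'.symm) h

lemma orth_li {n m : ℕ} {f : Fin n → Fin m → ℝ}
    (h : ∀ i j, i ≠ j → f i ⬝ᵥ f j = 0) (hne : ∀ i, f i ⬝ᵥ f i ≠ 0) :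
    LinearIndependent ℝ f := by
  rw [Fintype.linearIndependent_iff]
  intro g hg i
  have h0 : (∑ j, g j • f j) ⬝ᵥ f i = 0 := by rw [hg]; exact zero_dotProduct _
  rw [dot_sum_smul] at h0
  rw [Finset.sum_eq_single i (fun j _ hj => by rw [h j i hj, mul_zero])
    (fun hi => absurd (Finset.mem_univ i) hi)] at h0
  rcases mul_eq_zero.mp h0 with h' | h'
  · exact h'
  · exact absurd h' (hne i)

/-- the central scalar inequality -/
lemma key_ineq {d ρ A B P s t : ℝ} (hd : 0 < d) (hρ : 0 < ρ) (hB : 0 < B) (hAB : B ≤ A)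
    (hP : 0 ≤ P) (hs : s ^ 2 ≤ (A - B) * P) :
    d * ρ * B / (d + ρ * A) * (P + t ^ 2 * B) ≤ d * P + ρ * (s + t * B) ^ 2 := by
  have hA : 0 < A := lt_of_lt_of_le hB hAB
  have hden : 0 < d + ρ * A := by positivity
  rw [div_mul_eq_mul_div, div_le_iff₀ hden]
  have key : A * (d * ρ * B * (P + t ^ 2 * B)) ≤
      A * ((d * P + ρ * (s + t * B) ^ 2) * (d + ρ * A)) := by
    nlinarith [sq_nonneg (ρ * A * (s + t * B) + d * s),
      mul_nonneg (mul_nonneg hd.le hden.le) (sub_nonneg.2 hs),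
      mul_nonneg (mul_nonneg (mul_pos hd hd).le hB.le) hP]
  exact le_of_mul_le_mul_left key hA

/-- quadratic form of a matrix on a span of orthogonal eigenvectors -/
lemma quad_form {m n : ℕ} {M : Matrix (Fin m) (Fin m) ℝ} {f : Fin n → Fin m → ℝ}
    {μ w : Fin n → ℝ}
    (horth : ∀ i j, f i ⬝ᵥ f j = if i = j then w i else 0)
    (heig : ∀ i, M *ᵥ f i = μ i • f i) (c : Fin n → ℝ) :
    ((∑ i, c i • f i) ⬝ᵥ (M *ᵥ ∑ i, c i • f i) = ∑ i, μ i * w i * c i ^ 2) ∧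
    ((∑ i, c i • f i) ⬝ᵥ (∑ i, c i • f i) = ∑ i, w i * c i ^ 2) := by
  have hMx : M *ᵥ (∑ i, c i • f i) = ∑ i, (c i * μ i) • f i := by
    rw [show M *ᵥ (∑ i, c i • f i) = M.mulVecLin (∑ i, c i • f i) from rfl, map_sum]
    refine Finset.sum_congr rfl fun i _ => ?_
    rw [_root_.map_smul, mulVecLin_apply, heig, smul_smul]
  constructor
  · rw [hMx, dot_sum_smul]
    refine Finset.sum_congr rfl fun i _ => ?_
    rw [dot_smul_sum, Finset.sum_eq_single i
      (fun j _ hj => by rw [horth i j, if_neg (Ne.symm hj), mul_zero])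
      (fun hi => absurd (Finset.mem_univ i) hi)]
    rw [horth i i, if_pos rfl]; ring
  · rw [dot_sum_smul]
    refine Finset.sum_congr rfl fun i _ => ?_
    rw [dot_smul_sum, Finset.sum_eq_single i
      (fun j _ hj => by rw [horth i j, if_neg (Ne.symm hj), mul_zero])
      (fun hi => absurd (Finset.mem_univ i) hi)]
    rw [horth i i, if_pos rfl]; ring

end TotalCovAux

open TotalCovAux Module

set_option maxHeartbeats 1000000

/-- Lemma 5 (second case): under Condition 1 with explicit gap `d`, if
`δ = δ₁ + δ₂` with `δ₂ ≠ 0`, then the eigenvalues of `Σᵗᵒᵗ` satisfy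
`η_{k+1} ≥ η_{k+2} + d̃` and `η_{k+2} = η_{k+3} = ... = η_p`, where
`d̃ = d·ρ‖δ₂‖₂²/(d + ρ‖δ‖₂²)`. -/
theorem total_covariance_spiked_delta_not_in_W1
    {p k : ℕ} (hk : 1 ≤ k) (hkp : k < p) (hk2p : k + 2 ≤ p)
    (S : Matrix (Fin p) (Fin p) ℝ) (hS : S.IsSymm)
    (lam : Fin p → ℝ) (xi : Fin p → (Fin p → ℝ))
    (hpos : ∀ j, 0 < lam j)
    (hdesc : ∀ i j : Fin p, i ≤ j → lam j ≤ lam i)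
    (horth : ∀ i j : Fin p, xi i ⬝ᵥ xi j = if i = j then (1 : ℝ) else 0)
    (heig : ∀ j, S.mulVec (xi j) = lam j • xi j)
    (δ : Fin p → ℝ) (ρ : ℝ) (hρ : 0 < ρ)
    -- η are the eigenvalues of Σᵗᵒᵗ in descending order
    (η : Fin p → ℝ) (hηdesc : ∀ i j : Fin p, i ≤ j → η j ≤ η i)
    (V : Matrix (Fin p) (Fin p) ℝ) (hV : Vᵀ * V = 1)
    (hdiag : Vᵀ * (S + ρ • vecMulVec δ δ) * V = Matrix.diagonal η)
    -- Condition 1 with explicit gap d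
    (d : ℝ) (hd : 0 < d)
    (hgap : lam ⟨k, hkp⟩ + d ≤ lam ⟨k - 1, by omega⟩)
    (hflat : ∀ j : Fin p, k ≤ (j : ℕ) → lam j = lam ⟨k, hkp⟩)
    -- decomposition δ = δ₁ + δ₂ with δ₂ ≠ 0
    (δ1 δ2 : Fin p → ℝ) (hdec : δ = δ1 + δ2)
    (hδ1 : δ1 ∈ Submodule.span ℝ
      (Set.range fun i : Fin k => xi ⟨i.1, lt_trans i.isLt hkp⟩))
    (hδ2 : δ2 ∈ Submodule.span ℝ
      (Set.range fun i : Fin (p - k) => xi ⟨k + i.1, by omega⟩))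
    (hδ2ne : δ2 ≠ 0)
    (dt : ℝ)
    (hdt : dt = d * ρ * (∑ i, δ2 i ^ 2) / (d + ρ * ∑ i, δ i ^ 2)) :
    η ⟨k + 1, by omega⟩ + dt ≤ η ⟨k, hkp⟩ ∧
      ∀ j : Fin p, k + 1 ≤ (j : ℕ) → η j = η ⟨k + 1, by omega⟩ := by
  classical
  set L : ℝ := lam ⟨k, hkp⟩ with hLdef
  set M : Matrix (Fin p) (Fin p) ℝ := S + ρ • vecMulVec δ δ with hMdef
  set A : ℝ := δ ⬝ᵥ δ with hAdef
  set B : ℝ := δ2 ⬝ᵥ δ2 with hBdef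
  have hA2 : (∑ i, δ i ^ 2) = A := by simp [hAdef, dotProduct, sq]
  have hB2 : (∑ i, δ2 i ^ 2) = B := by simp [hBdef, dotProduct, sq]
  have hBpos : 0 < B := dot_self_pos hδ2ne
  -- orthogonality relations
  have hδ2xi : ∀ j : Fin p, (j : ℕ) < k → δ2 ⬝ᵥ xi j = 0 := by
    intro j hj
    refine span_dot hδ2 fun i => ?_
    rw [horth, if_neg]
    intro h
    have : k + i.1 = j.1 := by simpa [Fin.ext_iff] using h
    omega
  have hδ1xi : ∀ j : Fin p, k ≤ (j : ℕ) → δ1 ⬝ᵥ xi j = 0 := by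
    intro j hj
    refine span_dot hδ1 fun i => ?_
    rw [horth, if_neg]
    intro h
    have : i.1 = j.1 := by simpa [Fin.ext_iff] using h
    omega
  have hδ12 : δ1 ⬝ᵥ δ2 = 0 := by
    rw [dotProduct_comm]
    refine span_dot hδ2 fun i => ?_
    rw [dotProduct_comm]
    exact hδ1xi _ (by simp)
  have hAB : A = δ1 ⬝ᵥ δ1 + B := by
    rw [hAdef, hdec, hBdef]
    rw [add_dotProduct, dotProduct_add, dotProduct_add, hδ12, dotProduct_comm δ2 δ1, hδ12]
    ring
  have hABle : B ≤ A := by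
    rcases eq_or_ne δ1 0 with h | h
    · simp [hAB, h]
    · linarith [dot_self_pos h]
  have hApos : 0 < A := lt_of_lt_of_le hBpos hABle
  have hdt' : dt = d * ρ * B / (d + ρ * A) := by rw [hdt, hA2, hB2]
  -- M applied to a vector
  have hMapp : ∀ x, M *ᵥ x = S *ᵥ x + (ρ * (δ ⬝ᵥ x)) • δ := by
    intro x
    rw [hMdef, add_mulVec, smul_mulVec]
    congr 1
    funext i
    simp only [mulVec, dotProduct, vecMulVec_apply, Pi.smul_apply, smul_eq_mul, Finset.mul_sum]
    rw [Finset.sum_mul]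
    exact Finset.sum_congr rfl fun j _ => by ring
  have hRay : ∀ x, x ⬝ᵥ (M *ᵥ x) = x ⬝ᵥ (S *ᵥ x) + ρ * (δ ⬝ᵥ x) ^ 2 := by
    intro x
    rw [hMapp, dotProduct_add, dotProduct_smul, smul_eq_mul, dotProduct_comm x δ]
    ring
  -- S acts as L on W2
  set W2 : Submodule ℝ (Fin p → ℝ) :=
    Submodule.span ℝ (Set.range fun i : Fin (p - k) => xi ⟨k + i.1, by omega⟩) with hW2def
  have hδ2' : δ2 ∈ W2 := hδ2
  have hSflat : ∀ x ∈ W2, S *ᵥ x = L • x := by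
    intro x hx
    have hle : W2 ≤ LinearMap.ker (S.mulVecLin - L • LinearMap.id) := by
      rw [hW2def, Submodule.span_le]
      rintro _ ⟨i, rfl⟩
      have hfl : lam ⟨k + i.1, by omega⟩ = L := hflat _ (by simp)
      simp [LinearMap.mem_ker, LinearMap.sub_apply, mulVecLin_apply, heig, hfl, sub_self]
    have h' := hle hx
    rw [LinearMap.mem_ker, LinearMap.sub_apply, mulVecLin_apply] at h'
    have h'' := sub_eq_zero.mp h'
    simpa using h''
  -- columns of V
  set col : Fin p → (Fin p → ℝ) := fun j i => V i j with hcoldef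
  have hcolorth : ∀ i j, col i ⬝ᵥ col j = if i = j then (1 : ℝ) else 0 := by
    intro i j
    have h := congrFun (congrFun hV i) j
    simp only [Matrix.mul_apply, Matrix.one_apply, transpose_apply] at h
    simpa [hcoldef, dotProduct] using h
  have hVVt : V * Vᵀ = 1 := mul_eq_one_comm.mp hV
  have hMV : M * V = V * Matrix.diagonal η := by
    calc M * V = (V * Vᵀ) * M * V := by rw [hVVt, one_mul]
    _ = V * (Vᵀ * M * V) := by rw [Matrix.mul_assoc V Vᵀ M, Matrix.mul_assoc V (Vᵀ * M) V]
    _ = V * Matrix.diagonal η := by rw [hdiag]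
  have hMcol : ∀ j, M *ᵥ col j = η j • col j := by
    intro j
    funext i
    have h := congrFun (congrFun hMV i) j
    rw [Matrix.mul_apply, Matrix.mul_diagonal] at h
    simpa [hcoldef, mulVec, dotProduct, mul_comm] using h
  -- Rayleigh lower bound for S
  have hRayS : ∀ x : Fin p → ℝ, L * (x ⬝ᵥ x) ≤ x ⬝ᵥ (S *ᵥ x) := by
    set Ξ : Matrix (Fin p) (Fin p) ℝ := Matrix.of fun i j => xi j i with hΞdef
    have hΞo : Ξᵀ * Ξ = 1 := by
      ext i j
      have h := horth i j
      simp only [dotProduct] at h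
      simp only [Matrix.mul_apply, transpose_apply, Matrix.one_apply, hΞdef, Matrix.of_apply]
      exact h
    have hΞΞt : Ξ * Ξᵀ = 1 := mul_eq_one_comm.mp hΞo
    have hSXi : S * Ξ = Ξ * Matrix.diagonal lam := by
      ext i j
      have h := congrFun (heig j) i
      simp only [mulVec, dotProduct, Pi.smul_apply, smul_eq_mul] at h
      rw [Matrix.mul_apply, Matrix.mul_diagonal]
      simpa [hΞdef, mul_comm] using h
    have hS' : S = Ξ * Matrix.diagonal lam * Ξᵀ := by
      calc S = S * (Ξ * Ξᵀ) := by rw [hΞΞt, Matrix.mul_one]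
      _ = (S * Ξ) * Ξᵀ := by rw [Matrix.mul_assoc]
      _ = Ξ * Matrix.diagonal lam * Ξᵀ := by rw [hSXi]
    intro x
    set y : Fin p → ℝ := Ξᵀ *ᵥ x with hydef
    have hyy : y ⬝ᵥ y = x ⬝ᵥ x := by
      calc y ⬝ᵥ y = (x ᵥ* Ξ) ⬝ᵥ y := by rw [← mulVec_transpose]
      _ = x ⬝ᵥ (Ξ *ᵥ y) := (dotProduct_mulVec x Ξ y).symm
      _ = x ⬝ᵥ ((Ξ * Ξᵀ) *ᵥ x) := by rw [hydef, mulVec_mulVec]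
      _ = x ⬝ᵥ x := by rw [hΞΞt, one_mulVec]
    have hxSx : x ⬝ᵥ (S *ᵥ x) = ∑ i, lam i * y i ^ 2 := by
      calc x ⬝ᵥ (S *ᵥ x) = x ⬝ᵥ ((Ξ * Matrix.diagonal lam * Ξᵀ) *ᵥ x) := by rw [← hS']
      _ = x ⬝ᵥ (Ξ *ᵥ (Matrix.diagonal lam *ᵥ y)) := by
          conv_rhs => rw [hydef, mulVec_mulVec, mulVec_mulVec]
      _ = (x ᵥ* Ξ) ⬝ᵥ (Matrix.diagonal lam *ᵥ y) := dotProduct_mulVec x Ξ _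
      _ = y ⬝ᵥ (Matrix.diagonal lam *ᵥ y) := by rw [← mulVec_transpose]
      _ = ∑ i, lam i * y i ^ 2 := by
          simp only [dotProduct, mulVec_diagonal]
          exact Finset.sum_congr rfl fun i _ => by ring
    have hy2 : x ⬝ᵥ x = ∑ i, y i ^ 2 := by
      rw [← hyy]; simp [dotProduct, sq]
    rw [hxSx, hy2, Finset.mul_sum]
    refine Finset.sum_le_sum fun i _ => ?_
    have hLi : L ≤ lam i := by
      by_cases hik : (i : ℕ) < k
      · exact hdesc i ⟨k, hkp⟩ (by rw [Fin.le_def]; exact le_of_lt hik)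
      · rw [hflat i (by omega)]
    exact mul_le_mul_of_nonneg_right hLi (sq_nonneg _)
  -- all η are ≥ L
  have hetaL : ∀ j, L ≤ η j := by
    intro j
    have h2 : col j ⬝ᵥ col j = 1 := by rw [hcolorth j j, if_pos rfl]
    have h1 : col j ⬝ᵥ (M *ᵥ col j) = η j := by
      rw [hMcol, dotProduct_smul, smul_eq_mul, h2, mul_one]
    have h3 := hRayS (col j)
    rw [h2, mul_one] at h3
    have h4 := hRay (col j)
    nlinarith [mul_nonneg hρ.le (sq_nonneg (δ ⬝ᵥ col j))]
  -- dimension counting helper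
  have frk : finrank ℝ (Fin p → ℝ) = p := by
    simp [Module.finrank_fintype_fun_eq_card]
  have inter : ∀ (U Y : Submodule ℝ (Fin p → ℝ)), p < finrank ℝ U + finrank ℝ Y →
      ∃ x : Fin p → ℝ, x ≠ 0 ∧ x ∈ U ∧ x ∈ Y := by
    intro U Y h
    have h1 := Submodule.finrank_sup_add_finrank_inf_eq U Y
    have h2 : finrank ℝ ↥(U ⊔ Y) ≤ p := le_trans (Submodule.finrank_le _) frk.le
    have h3 : 0 < finrank ℝ ↥(U ⊓ Y) := by omega
    have : Nontrivial ↥(U ⊓ Y) := Module.finrank_pos_iff.mp h3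
    obtain ⟨x, hx⟩ := exists_ne (0 : ↥(U ⊓ Y))
    exact ⟨x.1, fun h0 => hx (Subtype.ext h0), x.2.1, x.2.2⟩
  -- part 2 core : η_{k+1} ≤ L
  have hle : η ⟨k + 1, by omega⟩ ≤ L := by
    by_contra hcon
    push_neg at hcon
    set e2 : Fin (k + 2) → Fin p := fun i => ⟨i.1, by omega⟩ with he2def
    have horthY : ∀ i j, col (e2 i) ⬝ᵥ col (e2 j) = if i = j then (1 : ℝ) else 0 := by
      intro i j
      rw [hcolorth]
      by_cases h : i = j
      · simp [h]
      · rw [if_neg, if_neg h]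
        intro hh
        exact h (Fin.ext (by simpa [he2def, Fin.ext_iff] using hh))
    have hliY : LinearIndependent ℝ (fun i => col (e2 i)) :=
      orth_li (fun i j hij => by rw [horthY, if_neg hij])
        (fun i => by rw [horthY, if_pos rfl]; norm_num)
    set Yp := Submodule.span ℝ (Set.range fun i => col (e2 i)) with hYpdef
    have hYrank : finrank ℝ ↥Yp = k + 2 := by
      rw [hYpdef, finrank_span_eq_card hliY, Fintype.card_fin]
    have hW2rank : finrank ℝ ↥W2 = p - k := by
      have hli2 : LinearIndependent ℝ (fun i : Fin (p - k) => xi ⟨k + i.1, by omega⟩) := by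
        refine orth_li (fun i j hij => ?_) (fun i => ?_)
        · rw [horth, if_neg]
          intro h
          have : k + i.1 = k + j.1 := by simpa [Fin.ext_iff] using h
          exact hij (Fin.ext (by omega))
        · rw [horth, if_pos rfl]; norm_num
      rw [hW2def, finrank_span_eq_card hli2, Fintype.card_fin]
    have hDkrank : p - 1 ≤ finrank ℝ ↥(LinearMap.ker (dotr (m := p) δ)) := by
      have h1 := LinearMap.finrank_range_add_finrank_ker (dotr (m := p) δ)
      rw [frk] at h1
      have h2 : finrank ℝ ↥(LinearMap.range (dotr (m := p) δ)) ≤ 1 := by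
        have h3 := Submodule.finrank_le (LinearMap.range (dotr (m := p) δ))
        simpa [Module.finrank_self] using h3
      omega
    have hErank : p - k - 1 ≤ finrank ℝ ↥(W2 ⊓ LinearMap.ker (dotr (m := p) δ)) := by
      have h1 := Submodule.finrank_sup_add_finrank_inf_eq W2 (LinearMap.ker (dotr (m := p) δ))
      have h2 : finrank ℝ ↥(W2 ⊔ LinearMap.ker (dotr (m := p) δ)) ≤ p :=
        le_trans (Submodule.finrank_le _) frk.le
      omega
    obtain ⟨x, hx0, hxY, hxE⟩ :=
      inter Yp (W2 ⊓ LinearMap.ker (dotr (m := p) δ)) (by rw [hYrank]; omega)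
    have hxx : 0 < x ⬝ᵥ x := dot_self_pos hx0
    have hxMx : x ⬝ᵥ (M *ᵥ x) = L * (x ⬝ᵥ x) := by
      have hxD : x ⬝ᵥ δ = 0 := hxE.2
      rw [hRay, hSflat x hxE.1, dotProduct_smul, smul_eq_mul, dotProduct_comm δ x, hxD]
      ring
    obtain ⟨c, hc⟩ := (Submodule.mem_span_range_iff_exists_fun ℝ).mp hxY
    have hq := quad_form (w := fun _ => (1 : ℝ)) horthY (fun i => hMcol (e2 i)) c
    rw [hc] at hq
    have hlow : η ⟨k + 1, by omega⟩ * (x ⬝ᵥ x) ≤ x ⬝ᵥ (M *ᵥ x) := by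
      rw [hq.1, hq.2, Finset.mul_sum]
      refine Finset.sum_le_sum fun i _ => ?_
      have hhe : η ⟨k + 1, by omega⟩ ≤ η (e2 i) := by
        refine hηdesc (e2 i) ⟨k + 1, by omega⟩ ?_
        rw [Fin.le_def]
        simp only [he2def]
        omega
      nlinarith [sq_nonneg (c i)]
    have h6 := mul_lt_mul_of_pos_right hcon hxx
    rw [hxMx] at hlow
    exact absurd hlow (not_le.mpr h6)
  have part2 : ∀ j : Fin p, k + 1 ≤ (j : ℕ) → η j = L := by
    intro j hj
    refine le_antisymm (le_trans (hηdesc ⟨k + 1, by omega⟩ j ?_) hle) (hetaL j)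
    exact hj
  -- part 1 : L + dt ≤ η_k
  have part1 : L + dt ≤ η ⟨k, hkp⟩ := by
    by_contra hcon
    push_neg at hcon
    set g : Fin (k + 1) → (Fin p → ℝ) :=
      fun i => if h : i.1 < k then xi ⟨i.1, lt_trans h hkp⟩ else δ2 with hgdef
    set wg : Fin (k + 1) → ℝ := fun i => if i.1 < k then 1 else B with hwgdef
    set μg : Fin (k + 1) → ℝ :=
      fun i => if h : i.1 < k then lam ⟨i.1, lt_trans h hkp⟩ else L with hμgdef
    have horthg : ∀ i j, g i ⬝ᵥ g j = if i = j then wg i else 0 := by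
      intro i j
      by_cases hij : i = j
      · subst hij
        rw [if_pos rfl]
        by_cases hi : i.1 < k
        · simp only [hgdef, hwgdef, dif_pos hi, if_pos hi]
          rw [horth, if_pos rfl]
        · simp only [hgdef, hwgdef, dif_neg hi, if_neg hi]
          exact hBdef.symm
      · rw [if_neg hij]
        by_cases hi : i.1 < k <;> by_cases hj : j.1 < k
        · simp only [hgdef, dif_pos hi, dif_pos hj]
          rw [horth, if_neg]
          intro h
          exact hij (Fin.ext (by simpa [Fin.ext_iff] using h))
        · simp only [hgdef, dif_pos hi, dif_neg hj]
          rw [dotProduct_comm]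
          exact hδ2xi _ hi
        · simp only [hgdef, dif_neg hi, dif_pos hj]
          exact hδ2xi _ hj
        · exact absurd (Fin.ext (by omega : i.1 = j.1)) hij
    have heigg : ∀ i, S *ᵥ g i = μg i • g i := by
      intro i
      by_cases hi : i.1 < k
      · simp only [hgdef, hμgdef, dif_pos hi]
        exact heig _
      · simp only [hgdef, hμgdef, dif_neg hi]
        exact hSflat δ2 hδ2'
    have hlig : LinearIndependent ℝ g := by
      refine orth_li (fun i j hij => by rw [horthg, if_neg hij]) (fun i => ?_)
      rw [horthg, if_pos rfl, hwgdef]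
      dsimp only
      split
      · norm_num
      · exact ne_of_gt hBpos
    set U := Submodule.span ℝ (Set.range g) with hUdef
    have hUrank : finrank ℝ ↥U = k + 1 := by
      rw [hUdef, finrank_span_eq_card hlig, Fintype.card_fin]
    set eY : Fin (p - k) → Fin p := fun i => ⟨k + i.1, by omega⟩ with heYdef
    have horthYl : ∀ i j, col (eY i) ⬝ᵥ col (eY j) = if i = j then (1 : ℝ) else 0 := by
      intro i j
      rw [hcolorth]
      by_cases h : i = j
      · simp [h]
      · rw [if_neg, if_neg h]
        intro hh
        have : k + i.1 = k + j.1 := by simpa [heYdef, Fin.ext_iff] using hh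
        exact h (Fin.ext (by omega))
    have hliYl : LinearIndependent ℝ (fun i => col (eY i)) :=
      orth_li (fun i j hij => by rw [horthYl, if_neg hij])
        (fun i => by rw [horthYl, if_pos rfl]; norm_num)
    set Yl := Submodule.span ℝ (Set.range fun i => col (eY i)) with hYldef
    have hYlrank : finrank ℝ ↥Yl = p - k := by
      rw [hYldef, finrank_span_eq_card hliYl, Fintype.card_fin]
    obtain ⟨x, hx0, hxU, hxY⟩ := inter U Yl (by rw [hUrank, hYlrank]; omega)
    have hxx : 0 < x ⬝ᵥ x := dot_self_pos hx0
    -- upper bound from Yl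
    obtain ⟨c, hc⟩ := (Submodule.mem_span_range_iff_exists_fun ℝ).mp hxY
    have hqY := quad_form (w := fun _ => (1 : ℝ)) horthYl (fun i => hMcol (eY i)) c
    rw [hc] at hqY
    have hupp : x ⬝ᵥ (M *ᵥ x) ≤ η ⟨k, hkp⟩ * (x ⬝ᵥ x) := by
      rw [hqY.1, hqY.2, Finset.mul_sum]
      refine Finset.sum_le_sum fun i _ => ?_
      have hle' : η (eY i) ≤ η ⟨k, hkp⟩ := by
        refine hηdesc ⟨k, hkp⟩ (eY i) ?_
        rw [Fin.le_def]
        simp only [heYdef]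
        omega
      nlinarith [sq_nonneg (c i)]
    -- lower bound from U
    obtain ⟨a, ha⟩ := (Submodule.mem_span_range_iff_exists_fun ℝ).mp hxU
    have hqU := quad_form horthg heigg a
    rw [ha] at hqU
    set P : ℝ := ∑ i : Fin k, a i.castSucc ^ 2 with hPdef
    set t : ℝ := a (Fin.last k) with htdef
    have hPnn : 0 ≤ P := Finset.sum_nonneg fun i _ => sq_nonneg _
    have hwcast : ∀ i : Fin k, wg i.castSucc = 1 := by
      intro i
      rw [hwgdef]
      simp [Fin.coe_castSucc, i.isLt]
    have hwlast : wg (Fin.last k) = B := by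
      rw [hwgdef]
      simp
    have hxxs : x ⬝ᵥ x = P + t ^ 2 * B := by
      rw [hqU.2, Fin.sum_univ_castSucc, hwlast]
      have h1 : ∑ i : Fin k, wg i.castSucc * a i.castSucc ^ 2 = P := by
        rw [hPdef]
        exact Finset.sum_congr rfl fun i _ => by rw [hwcast i, one_mul]
      rw [h1, htdef]
      ring
    -- δ dot x
    set b : Fin k → ℝ := fun i => xi ⟨i.1, lt_trans i.isLt hkp⟩ ⬝ᵥ δ with hbdef
    set s : ℝ := ∑ i : Fin k, a i.castSucc * b i with hsdef
    have hδx : x ⬝ᵥ δ = s + t * B := by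
      rw [← ha, dot_sum_smul, Fin.sum_univ_castSucc]
      have h2 : g (Fin.last k) ⬝ᵥ δ = B := by
        have hlk : ¬ ((Fin.last k : Fin (k + 1)).1 < k) := by simp
        rw [hgdef]
        simp only [dif_neg hlk]
        rw [hdec, dotProduct_add, dotProduct_comm δ2 δ1, hδ12, zero_add, hBdef]
      have h1 : ∑ i : Fin k, a i.castSucc * (g i.castSucc ⬝ᵥ δ) = s := by
        rw [hsdef]
        refine Finset.sum_congr rfl fun i _ => ?_
        have hik : ((i.castSucc : Fin (k + 1)).1 < k) := i.isLt
        rw [hgdef, hbdef]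
        simp only [Fin.coe_castSucc]
        rw [dif_pos i.isLt]
      rw [h2, h1, htdef]
    -- Cauchy–Schwarz and norms of δ1
    obtain ⟨mm, hmm⟩ := (Submodule.mem_span_range_iff_exists_fun ℝ).mp hδ1
    have hxiδ1 : ∀ i : Fin k, xi ⟨i.1, lt_trans i.isLt hkp⟩ ⬝ᵥ δ1 = mm i := by
      intro i
      rw [dotProduct_comm, ← hmm, dot_sum_smul]
      rw [Finset.sum_eq_single i (fun j _ hj => ?_) (fun hi => absurd (Finset.mem_univ i) hi)]
      · rw [horth, if_pos rfl, mul_one]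
      · rw [horth, if_neg, mul_zero]
        intro h
        exact hj (Fin.ext (by simpa [Fin.ext_iff] using h))
    have hbm : ∀ i : Fin k, b i = mm i := by
      intro i
      rw [hbdef]
      dsimp only
      rw [hdec, dotProduct_add, hxiδ1 i]
      have h2 : xi ⟨i.1, lt_trans i.isLt hkp⟩ ⬝ᵥ δ2 = 0 := by
        rw [dotProduct_comm]
        exact hδ2xi _ i.isLt
      rw [h2, add_zero]
    have hδ1δ1 : δ1 ⬝ᵥ δ1 = ∑ i : Fin k, mm i ^ 2 := by
      calc δ1 ⬝ᵥ δ1 = (∑ i : Fin k, mm i • xi ⟨i.1, lt_trans i.isLt hkp⟩) ⬝ᵥ δ1 := by rw [hmm]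
      _ = ∑ i : Fin k, mm i * (xi ⟨i.1, lt_trans i.isLt hkp⟩ ⬝ᵥ δ1) := dot_sum_smul _ _ _
      _ = ∑ i : Fin k, mm i ^ 2 := by
          refine Finset.sum_congr rfl fun i _ => ?_
          rw [hxiδ1 i]
          ring
    have hsumb : ∑ i : Fin k, b i ^ 2 = A - B := by
      calc ∑ i : Fin k, b i ^ 2 = ∑ i : Fin k, mm i ^ 2 := by
            exact Finset.sum_congr rfl fun i _ => by rw [hbm i]
      _ = δ1 ⬝ᵥ δ1 := hδ1δ1.symm
      _ = A - B := by rw [hAB]; ring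
    have hcauchy : s ^ 2 ≤ (A - B) * P := by
      have hcs := Finset.sum_mul_sq_le_sq_mul_sq Finset.univ (fun i : Fin k => b i)
        (fun i => a i.castSucc)
      have hss : s = ∑ i : Fin k, b i * a i.castSucc := by
        rw [hsdef]
        exact Finset.sum_congr rfl fun i _ => mul_comm _ _
      rw [hss]
      calc (∑ i : Fin k, b i * a i.castSucc) ^ 2
          ≤ (∑ i : Fin k, b i ^ 2) * (∑ i : Fin k, a i.castSucc ^ 2) := hcs
      _ = (A - B) * P := by rw [hsumb, hPdef]
    -- lower bound x⬝Sx
    have hSlow : L * (P + t ^ 2 * B) + d * P ≤ x ⬝ᵥ (S *ᵥ x) := by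
      rw [hqU.1, Fin.sum_univ_castSucc]
      have hlastt : μg (Fin.last k) * wg (Fin.last k) * a (Fin.last k) ^ 2 = L * B * t ^ 2 := by
        have hlk : ¬ ((Fin.last k : Fin (k + 1)).1 < k) := by simp
        rw [hμgdef, hwlast, htdef]
        simp only [dif_neg hlk]
      rw [hlastt]
      have hsum1 : (L + d) * P ≤ ∑ i : Fin k, μg i.castSucc * wg i.castSucc * a i.castSucc ^ 2 := by
        rw [hPdef, Finset.mul_sum]
        refine Finset.sum_le_sum fun i _ => ?_
        have hik : ((i.castSucc : Fin (k + 1)).1 < k) := i.isLt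
        have h1 : μg i.castSucc = lam ⟨i.1, lt_trans i.isLt hkp⟩ := by
          rw [hμgdef]
          simp only [Fin.coe_castSucc]
          rw [dif_pos i.isLt]
        have h3 : L + d ≤ lam ⟨i.1, lt_trans i.isLt hkp⟩ := by
          refine le_trans hgap (hdesc _ _ ?_)
          rw [Fin.le_def]
          simp only
          omega
        rw [h1, hwcast i, mul_one]
        exact mul_le_mul_of_nonneg_right h3 (sq_nonneg _)
      nlinarith [hsum1]
    have hkey := key_ineq (t := t) (s := s) hd hρ hBpos hABle hPnn hcauchy
    have hlowM : (L + dt) * (x ⬝ᵥ x) ≤ x ⬝ᵥ (M *ᵥ x) := by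
      rw [hRay, hxxs]
      have hδx' : δ ⬝ᵥ x = s + t * B := by rw [dotProduct_comm]; exact hδx
      rw [hδx', hdt']
      have hS2 := hSlow
      rw [hxxs] at hxx
      nlinarith [hkey, hS2]
    have hlt := mul_lt_mul_of_pos_right hcon hxx
    linarith [hupp, hlowM]
  refine ⟨?_, ?_⟩
  · rw [part2 ⟨k + 1, by omega⟩ (by simp)]
    exact part1
  · intro j hj
    rw [part2 j hj, part2 ⟨k + 1, by omega⟩ (by simp)]
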